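/- arXiv:1203.1191 — 2 statements merged into one kernel-verified Lean document; each statement's English description precedes it below -/
import Mathlib

section
/- Explicit solution of the ergodic Bellman equation for the geometric OU model: the pair Λ = (1/2)(1-√(1-λ))η₀ + λ(r + (1/(2σ²))((1/2)σ²+α-r)²) and φ(y) = (1/2)(1-√(1-λ))(η₀/σ²)y² - (λ/σ²)((1/2)σ²+α-r)·y satisfies, for all y ∈ ℝ, Λ = (σ²/2)(φ''(y) + (1/(1-λ))φ'(y)²) + λr + (λ/(2(1-λ)))·θ(y)² + φ'(y)·(-(1/(1-λ))η₀y + (λ/(1-λ))((1/2)σ²+α-r)), where θ(y) = (-η₀y + (1/2)σ² + α - r)/σ. -/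
/-!
With `φ(y) = a y² + b y` the right-hand side of the Bellman equation is a quadratic polynomial
in `y`. Its `y²`-coefficient vanishes because `p = 2a = (1 - √(1-λ)) η₀ / σ²` is a root of the
Riccati equation `σ² p² - 2 η₀ p + λ η₀² / σ² = 0`, its `y`-coefficient vanishes by the choice of
`b = -λ c / σ²` with `c = σ²/2 + α - r`, and what remains is the constant `Λ`.
-/

lemma hasDerivAt_quadratic (a b y : ℝ) :
    HasDerivAt (fun y : ℝ => a * y ^ 2 + b * y) (2 * a * y + b) y :=
  (((hasDerivAt_pow 2 y).const_mul a).fun_add ((hasDerivAt_id y).const_mul b)).congr_deriv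
    (by push_cast; ring)

lemma deriv_quadratic (a b : ℝ) :
    deriv (fun y : ℝ => a * y ^ 2 + b * y) = fun y => 2 * a * y + b :=
  funext fun y => (hasDerivAt_quadratic a b y).deriv

lemma deriv_deriv_quadratic (a b : ℝ) :
    deriv (deriv fun y : ℝ => a * y ^ 2 + b * y) = fun _ => 2 * a := by
  rw [deriv_quadratic]
  exact funext fun y => (((hasDerivAt_id y).const_mul (2 * a)).add_const b).deriv.trans (mul_one _)

lemma bellman_quadratic_identity {lam s σ η₀ r c : ℝ} (hs : s ^ 2 = 1 - lam) (hs0 : s ≠ 0)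
    (hσ : σ ≠ 0) (y : ℝ) :
    (1 / 2) * (1 - s) * η₀ + lam * (r + (1 / (2 * σ ^ 2)) * c ^ 2) =
      (σ ^ 2 / 2) * ((1 - s) * (η₀ / σ ^ 2)
          + (1 / (1 - lam)) * ((1 - s) * (η₀ / σ ^ 2) * y - (lam / σ ^ 2) * c) ^ 2)
        + lam * r + (lam / (2 * (1 - lam))) * ((c - η₀ * y) / σ) ^ 2
        + ((1 - s) * (η₀ / σ ^ 2) * y - (lam / σ ^ 2) * c)
          * (-(1 / (1 - lam)) * η₀ * y + (lam / (1 - lam)) * c) := by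
  obtain rfl : lam = 1 - s ^ 2 := by linarith
  field_simp
  ring

theorem stmt8_general (lam σ η₀ r α : ℝ) (hlam : lam ∈ Set.Ioo (0:ℝ) 1) (hσ : 0 < σ)
    (θ φ : ℝ → ℝ) (Λ : ℝ)
    (hθ : ∀ y, θ y = (-η₀ * y + (1/2) * σ^2 + α - r) / σ)
    (hφ : ∀ y, φ y = (1/2) * (1 - Real.sqrt (1 - lam)) * (η₀ / σ^2) * y^2
        - (lam / σ^2) * ((1/2) * σ^2 + α - r) * y)
    (hΛ : Λ = (1/2) * (1 - Real.sqrt (1 - lam)) * η₀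
        + lam * (r + (1/(2*σ^2)) * ((1/2) * σ^2 + α - r)^2)) :
    ∀ y : ℝ, Λ = (σ^2/2) * (deriv (deriv φ) y + (1/(1-lam)) * (deriv φ y)^2)
      + lam * r + (lam/(2*(1-lam))) * (θ y)^2
      + deriv φ y * (-(1/(1-lam)) * η₀ * y
          + (lam/(1-lam)) * ((1/2)*σ^2 + α - r)) := by
  intro y
  set c := (1/2) * σ^2 + α - r
  set s := Real.sqrt (1 - lam)
  have hs : s ^ 2 = 1 - lam := Real.sq_sqrt (by linarith [hlam.2])
  have hs0 : s ≠ 0 := (Real.sqrt_pos.mpr (by linarith [hlam.2])).ne'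
  have hφ_quadratic :
      φ = fun y => (1/2) * (1 - s) * (η₀ / σ^2) * y ^ 2 + (-(lam / σ^2) * c) * y :=
    funext fun y => by rw [hφ]; ring
  have hθy : θ y = (c - η₀ * y) / σ := by rw [hθ]; ring
  rw [hΛ, hθy, hφ_quadratic, deriv_deriv_quadratic, deriv_quadratic]
  convert bellman_quadratic_identity hs hs0 hσ.ne' y using 2 <;> ring

theorem stmt8 (lam σ η₀ r α : ℝ) (hlam : lam ∈ Set.Ioo (0:ℝ) 1) (hσ : 0 < σ)
    (hη₀ : 0 < η₀)
    (θ φ : ℝ → ℝ) (Λ : ℝ)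
    (hθ : ∀ y, θ y = (-η₀ * y + (1/2) * σ^2 + α - r) / σ)
    (hφ : ∀ y, φ y = (1/2) * (1 - Real.sqrt (1 - lam)) * (η₀ / σ^2) * y^2
        - (lam / σ^2) * ((1/2) * σ^2 + α - r) * y)
    (hΛ : Λ = (1/2) * (1 - Real.sqrt (1 - lam)) * η₀
        + lam * (r + (1/(2*σ^2)) * ((1/2) * σ^2 + α - r)^2)) :
    ∀ y : ℝ, Λ = (σ^2/2) * (deriv (deriv φ) y + (1/(1-lam)) * (deriv φ y)^2)
      + lam * r + (lam/(2*(1-lam))) * (θ y)^2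
      + deriv φ y * (-(1/(1-lam)) * η₀ * y
          + (lam/(1-lam)) * ((1/2)*σ^2 + α - r)) :=
  stmt8_general lam σ η₀ r α hlam hσ θ φ Λ hθ hφ hΛ
end

section
/- Legendre transform computation in the outperformance duality: for Λ(λ) = (1/2)(1-√(1-λ))·a + λγ with a > 0 and γ ∈ ℝ, and c > a/4 + γ, one has sup_{λ∈(0,1)} (λc - Λ(λ)) = (a/4 - c + γ)²/(c - γ), the supremum being attained at λ[c] = 1 - (a/(4(c-γ)))² ∈ (0,1); and for c ≤ a/4 + γ the supremum sup_{λ∈(0,1)} (λc - Λ(λ)) equals 0. -/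
theorem stmt10 (a γ : ℝ) (ha : 0 < a)
    (Λ : ℝ → ℝ)
    (hΛ : ∀ lam, Λ lam = (1/2) * (1 - Real.sqrt (1 - lam)) * a + lam * γ) :
    (∀ c : ℝ, a/4 + γ < c →
      (1 - (a/(4*(c-γ)))^2 ∈ Set.Ioo (0:ℝ) 1 ∧
       IsGreatest ((fun lam => lam * c - Λ lam) '' Set.Ioo 0 1)
         ((a/4 - c + γ)^2 / (c - γ)) ∧
       (1 - (a/(4*(c-γ)))^2) * c - Λ (1 - (a/(4*(c-γ)))^2)
         = (a/4 - c + γ)^2 / (c - γ))) ∧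
    (∀ c : ℝ, c ≤ a/4 + γ →
      IsLUB ((fun lam => lam * c - Λ lam) '' Set.Ioo 0 1) 0) := by
  constructor
  · intro c hc
    set b := c - γ with hbdef
    have hb : a/4 < b := by simp only [hbdef]; linarith
    have hb0 : 0 < b := by linarith
    have hd0 : 0 < a/(4*b) := by positivity
    have hd1 : a/(4*b) < 1 := by
      rw [div_lt_one (by linarith)]; linarith
    have hsq : Real.sqrt (1 - (1 - (a/(4*b))^2)) = a/(4*b) := by
      rw [show (1 - (1 - (a/(4*b))^2)) = (a/(4*b))^2 by ring, Real.sqrt_sq hd0.le]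
    have hmem : 1 - (a/(4*b))^2 ∈ Set.Ioo (0:ℝ) 1 := by
      constructor
      · nlinarith
      · nlinarith
    have hcb : c = b + γ := by rw [hbdef]; ring
    have heq : (1 - (a/(4*b))^2) * c - Λ (1 - (a/(4*b))^2) = (a/4 - c + γ)^2 / b := by
      rw [hΛ, hsq, hcb]
      field_simp
      ring
    refine ⟨hmem, ⟨⟨_, hmem, heq⟩, ?_⟩, heq⟩
    rintro y ⟨lam, hlam, rfl⟩
    obtain ⟨hl0, hl1⟩ := hlam
    simp only [hΛ]
    rw [le_div_iff₀ hb0]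
    set t := Real.sqrt (1 - lam) with htdef
    have ht2 : t^2 = 1 - lam := Real.sq_sqrt (by linarith)
    have ht0 : 0 ≤ t := Real.sqrt_nonneg _
    have hlam2 : lam = 1 - t^2 := by linarith
    have key : 0 ≤ (b*t - a/4)^2 := sq_nonneg _
    have hgoal : ((1 - t^2)*(b+γ) - ((1/2)*(1-t)*a + (1-t^2)*γ))*b
        = (a/4 - (b+γ) + γ)^2 - (b*t - a/4)^2 := by ring
    rw [hcb, hlam2]
    linarith [hgoal, key]
  · intro c hc
    constructor
    · rintro y ⟨lam, hlam, rfl⟩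
      obtain ⟨hl0, hl1⟩ := hlam
      simp only [hΛ]
      set t := Real.sqrt (1 - lam) with htdef
      have ht2 : t^2 = 1 - lam := Real.sq_sqrt (by linarith)
      have ht0 : 0 ≤ t := Real.sqrt_nonneg _
      have ht1 : t ≤ 1 := by
        exact Real.sqrt_le_one.mpr (by linarith)
      have h2 : (1+t)*(c-γ) - a/2 ≤ 0 := by nlinarith
      have h3 : (1-t)*((1+t)*(c-γ) - a/2) ≤ 0 :=
        mul_nonpos_of_nonneg_of_nonpos (by linarith) h2
      nlinarith [h3, ht2]
    · intro w hw
      by_contra hwneg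
      push_neg at hwneg
      have hK : 0 < a/2 - (c - γ) := by linarith
      set K := a/2 - (c - γ) with hKdef
      set lam := min (1/2 : ℝ) ((-w)/(2*K)) with hldef
      have hl0 : 0 < lam := by
        apply lt_min (by norm_num)
        exact div_pos (by linarith) (by linarith)
      have hl1 : lam < 1 := lt_of_le_of_lt (min_le_left _ _) (by norm_num)
      have hlK : lam ≤ (-w)/(2*K) := min_le_right _ _
      have hlam : lam ∈ Set.Ioo (0:ℝ) 1 := ⟨hl0, hl1⟩
      have hub := hw ⟨lam, hlam, rfl⟩
      simp only [hΛ] at hub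
      set t := Real.sqrt (1 - lam) with htdef
      have ht2 : t^2 = 1 - lam := Real.sq_sqrt (by linarith)
      have ht0 : 0 ≤ t := Real.sqrt_nonneg _
      have htge : 1 - lam ≤ t := by
        nlinarith [ht2, ht0]
      have hlow : -lam * K ≤ lam * c - ((1/2) * (1 - t) * a + lam * γ) := by
        have h5 : (1 - t) * a ≤ lam * a :=
          mul_le_mul_of_nonneg_right (by linarith) ha.le
        simp only [hKdef]
        nlinarith [h5]
      have hlK2 : lam * K ≤ -w/2 := by
        calc lam * K ≤ ((-w)/(2*K)) * K :=
              mul_le_mul_of_nonneg_right hlK hK.le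
          _ = -w/2 := by field_simp
      linarith
end
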